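/- arXiv:2004.09499 — 3 statements merged into one kernel-verified Lean document; each statement's English description precedes it below -/
import Mathlib

section
/- Define linear operators $u_1, u_2, \ldots$ on the free $\mathbb{Q}[\beta]$-module spanned by all partitions by $u_i \cdot \lambda = (-\beta)^{|\overline{\lambda + e_i}| - |\lambda + e_i|} \cdot \overline{\lambda + e_i}$, where for a sequence $n = (n_1, \ldots, n_r)$, $\overline{n}$ is defined by $\overline{n}_i = \min(n_i, n_{i+1}, \ldots, n_r)$. Then these operators satisfy the Knuth relations: $u_i u_k u_j = u_k u_i u_j$ for $i \le j < k$, and $u_j u_i u_k = u_j u_k u_i$ for $i < j \le k$. -/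
/-- A partition: a finitely supported weakly decreasing sequence of natural numbers. -/
def PartitionF : Type := {f : ℕ →₀ ℕ // ∀ a b : ℕ, a ≤ b → f b ≤ f a}

/-- The size `|f| = ∑ᵢ fᵢ`. -/
def wt (f : ℕ →₀ ℕ) : ℕ := f.sum fun _ v => v

/-- `λ + e_i`: add a box in row `i`. -/
noncomputable def addBox (i : ℕ) (f : ℕ →₀ ℕ) : ℕ →₀ ℕ := f + Finsupp.single i 1

/-- `f̄`: the smallest partition containing `f` componentwise (suffix maxima,
`f̄ⱼ = max(fⱼ, f_{j+1}, …)`). -/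
noncomputable def obar (f : ℕ →₀ ℕ) : ℕ →₀ ℕ :=
  Finsupp.onFinset (Finset.range (f.support.sup id + 1))
    (fun j => (f.support.filter fun m => j ≤ m).sup f)
    (by
      intro j hj
      simp only [Finset.mem_range]
      by_contra hlt
      push_neg at hlt
      apply hj
      show (f.support.filter fun m => j ≤ m).sup f = 0
      have hempty : (f.support.filter fun m => j ≤ m) = ∅ := by
        rw [Finset.filter_eq_empty_iff]
        intro m hm
        have h1 : id m ≤ f.support.sup id := Finset.le_sup hm
        simp only [id] at h1
        omega
      rw [hempty]
      rfl)

lemma obar_anti (f : ℕ →₀ ℕ) : ∀ a b : ℕ, a ≤ b → obar f b ≤ obar f a := by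
  intro a b hab
  simp only [obar, Finsupp.onFinset_apply]
  apply Finset.sup_mono
  intro m hm
  simp only [Finset.mem_filter] at hm ⊢
  exact ⟨hm.1, le_trans hab hm.2⟩

/-- The operator `u_i` on the free `ℚ[β]`-module spanned by all partitions:
`u_i · λ = (-β)^{|overline(λ+e_i)| - |λ+e_i|} · overline(λ+e_i)`. -/
noncomputable def uop (i : ℕ) :
    (PartitionF →₀ Polynomial ℚ) →ₗ[Polynomial ℚ] (PartitionF →₀ Polynomial ℚ) :=
  Finsupp.lift (PartitionF →₀ Polynomial ℚ) (Polynomial ℚ) PartitionF fun p =>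
    ((-(Polynomial.X : Polynomial ℚ)) ^ (wt (obar (addBox i p.1)) - wt (addBox i p.1))) •
      Finsupp.single (⟨obar (addBox i p.1), obar_anti _⟩ : PartitionF) (1 : Polynomial ℚ)

/-!
For a partition `λ`, `obar (addBox i λ)` raises the rows `r, …, i` to `λ i + 1`, where `r` is the
first row of length `λ i`, and the exponent of `-β` is the number of rows `m < i` with
`λ m = λ i`. If `i < k` and `λ k < λ i`, the two raisings touch disjoint blocks of rows, so `u_i`
and `u_k` commute on `λ`. This gives the first relation, because `λ = u_j μ` with `i ≤ j < k`
has `λ k ≤ μ j < λ i`, and the second one when `μ k < μ i`. In the remaining case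
`μ i = μ j = μ k` both sides of the second relation produce the same partition, and the exponents
agree after summing them row by row.
-/

open Finset Polynomial

lemma le_obar_apply (f : ℕ →₀ ℕ) {j m : ℕ} (h : j ≤ m) : f m ≤ obar f j := by
  by_cases hm : f m = 0
  · simp [hm]
  · exact Finset.le_sup (f := f) (mem_filter.mpr ⟨Finsupp.mem_support_iff.mpr hm, h⟩)

lemma obar_apply_le (f : ℕ →₀ ℕ) {j b : ℕ} (h : ∀ m, j ≤ m → f m ≤ b) : obar f j ≤ b :=
  Finset.sup_le fun m hm => h m (mem_filter.mp hm).2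

lemma addBox_apply (i : ℕ) (f : ℕ →₀ ℕ) (m : ℕ) :
    addBox i f m = f m + if m = i then 1 else 0 := by
  simp [addBox, Finsupp.single_apply, eq_comm]

lemma obar_addBox_apply {f : ℕ →₀ ℕ} (hf : Antitone f) (i j : ℕ) :
    obar (addBox i f) j = if j ≤ i then max (f j) (f i + 1) else f j := by
  apply le_antisymm
  · refine obar_apply_le _ fun m hjm => ?_
    have := hf hjm
    rw [addBox_apply]
    rcases eq_or_ne m i with rfl | hmi
    · simp only [if_pos hjm, if_true]
      omega
    · simp only [hmi, if_false]
      split_ifs <;> omega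
  · have hj := le_obar_apply (addBox i f) (le_refl j)
    rw [addBox_apply] at hj
    split_ifs with hji
    · have hi := le_obar_apply (addBox i f) hji
      rw [addBox_apply, if_pos rfl] at hi
      exact max_le (by omega) hi
    · omega

/-- For antitone `f` the summands are `0` or `1`, so this counts the rows `m < i` with
`f m = f i`. -/
def addBoxExcess (f : ℕ → ℕ) (i : ℕ) : ℕ := ∑ m ∈ range i, (f i + 1 - f m)

lemma addBoxExcess_eq_sum_range_ite (f : ℕ → ℕ) {i N : ℕ} (h : i ≤ N) :
    addBoxExcess f i = ∑ m ∈ range N, if m < i then f i + 1 - f m else 0 := by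
  rw [addBoxExcess, ← sum_filter]
  refine sum_congr ?_ fun _ _ => rfl
  ext m
  simp only [mem_filter, mem_range]
  omega

lemma obar_addBox_eq {f : ℕ →₀ ℕ} (hf : Antitone f) (i : ℕ) :
    obar (addBox i f) = addBox i f + ∑ m ∈ range i, Finsupp.single m (f i + 1 - f m) := by
  ext j
  simp only [obar_addBox_apply hf, Finsupp.add_apply, addBox_apply, Finsupp.finsetSum_apply,
    Finsupp.single_apply, sum_ite_eq', mem_range]
  rcases lt_trichotomy j i with hji | rfl | hij
  · have := hf hji.le
    split_ifs <;> omega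
  · simp
  · split_ifs <;> omega

lemma wt_eq_degree (f : ℕ →₀ ℕ) : wt f = f.degree := rfl

lemma wt_obar_addBox_sub {f : ℕ →₀ ℕ} (hf : Antitone f) (i : ℕ) :
    wt (obar (addBox i f)) - wt (addBox i f) = addBoxExcess f i := by
  rw [wt_eq_degree, wt_eq_degree, obar_addBox_eq hf, map_add, map_sum]
  simp only [Finsupp.degree_single, add_tsub_cancel_left]
  rfl

namespace PartitionF

lemma antitone (p : PartitionF) : Antitone ⇑p.1 := p.2

@[ext] lemma ext {p q : PartitionF} (h : ∀ m, p.1 m = q.1 m) : p = q :=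
  Subtype.ext (Finsupp.ext h)

noncomputable def grow (i : ℕ) (p : PartitionF) : PartitionF :=
  ⟨obar (addBox i p.1), obar_anti _⟩

lemma grow_apply (i : ℕ) (p : PartitionF) (m : ℕ) :
    (grow i p).1 m = if m ≤ i then max (p.1 m) (p.1 i + 1) else p.1 m :=
  obar_addBox_apply p.antitone i m

variable {i j k : ℕ} {p : PartitionF}

lemma apply_eq_of_mem_Icc (hp : p.1 i = p.1 k) {m : ℕ} (him : i ≤ m) (hmk : m ≤ k) :
    p.1 m = p.1 i :=
  le_antisymm (p.antitone him) (hp ▸ p.antitone hmk)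

lemma grow_apply_lt_grow_apply (hij : i ≤ j) (hjk : j < k) :
    (grow j p).1 k < (grow j p).1 i := by
  have := p.antitone hjk.le
  simp only [grow_apply]
  split_ifs <;> omega

lemma grow_comm (hik : i < k) (hp : p.1 k < p.1 i) : grow i (grow k p) = grow k (grow i p) := by
  ext m
  simp only [grow_apply]
  split_ifs <;> omega

lemma addBoxExcess_grow_of_lt (hik : i < k) (hp : p.1 k < p.1 i) :
    addBoxExcess (grow k p).1 i = addBoxExcess p.1 i := by
  refine sum_congr rfl fun m hm => ?_
  have := p.antitone (mem_range.mp hm).le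
  simp only [grow_apply]
  split_ifs <;> omega

lemma addBoxExcess_grow_of_gt (hik : i < k) (hp : p.1 k < p.1 i) :
    addBoxExcess (grow i p).1 k = addBoxExcess p.1 k := by
  refine sum_congr rfl fun m _ => ?_
  have hm : m ≤ i → p.1 i ≤ p.1 m := fun h => p.antitone h
  simp only [grow_apply]
  split_ifs <;> omega

lemma grow_grow_grow_of_eq (hij : i < j) (hjk : j ≤ k) (hp : p.1 i = p.1 k) :
    grow j (grow i (grow k p)) = grow j (grow k (grow i p)) := by
  have hpj := apply_eq_of_mem_Icc hp hij.le hjk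
  ext m
  have hm : (m ≤ i → p.1 i ≤ p.1 m) ∧ (i ≤ m → m ≤ k → p.1 m = p.1 i) :=
    ⟨fun h => p.antitone h, apply_eq_of_mem_Icc hp⟩
  simp only [grow_apply]
  split_ifs <;> omega

lemma addBoxExcess_add_add_of_eq (hij : i < j) (hjk : j ≤ k) (hp : p.1 i = p.1 k) :
    addBoxExcess p.1 k + addBoxExcess (grow k p).1 i + addBoxExcess (grow i (grow k p)).1 j =
      addBoxExcess p.1 i + addBoxExcess (grow i p).1 k +
        addBoxExcess (grow k (grow i p)).1 j := by
  have hpj := apply_eq_of_mem_Icc hp hij.le hjk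
  simp only [addBoxExcess_eq_sum_range_ite _ (le_refl k), addBoxExcess_eq_sum_range_ite _ hjk,
    addBoxExcess_eq_sum_range_ite _ (hij.le.trans hjk), ← sum_add_distrib]
  refine sum_congr rfl fun m _ => ?_
  have hm : (m ≤ i → p.1 i ≤ p.1 m) ∧ (i ≤ m → m ≤ k → p.1 m = p.1 i) :=
    ⟨fun h => p.antitone h, apply_eq_of_mem_Icc hp⟩
  simp only [grow_apply]
  split_ifs <;> omega

end PartitionF

open PartitionF

lemma uop_single (i : ℕ) (p : PartitionF) (c : ℚ[X]) :
    uop i (Finsupp.single p c) = Finsupp.single (grow i p) (c * (-X) ^ addBoxExcess p.1 i) := by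
  rw [← wt_obar_addBox_sub p.antitone]
  unfold uop
  erw [Finsupp.lift_apply, Finsupp.sum_single_index (by erw [zero_smul])]
  erw [smul_smul, Finsupp.smul_single, smul_eq_mul, mul_one]
  rfl

section

variable {i j k : ℕ} {p : PartitionF}

lemma uop_uop_single_comm (hik : i < k) (hp : p.1 k < p.1 i) (c : ℚ[X]) :
    uop i (uop k (Finsupp.single p c)) = uop k (uop i (Finsupp.single p c)) := by
  simp only [uop_single, grow_comm hik hp, addBoxExcess_grow_of_lt hik hp,
    addBoxExcess_grow_of_gt hik hp, mul_right_comm c]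

lemma uop_uop_uop_single_of_eq (hij : i < j) (hjk : j ≤ k) (hp : p.1 i = p.1 k) (c : ℚ[X]) :
    uop j (uop i (uop k (Finsupp.single p c))) = uop j (uop k (uop i (Finsupp.single p c))) := by
  simp only [uop_single, grow_grow_grow_of_eq hij hjk hp, mul_assoc, ← pow_add,
    addBoxExcess_add_add_of_eq hij hjk hp]

end

/-- The operators `u_i` satisfy the Knuth relations:
`u_i u_k u_j = u_k u_i u_j` for `i ≤ j < k`, and
`u_j u_i u_k = u_j u_k u_i` for `i < j ≤ k`. -/
theorem uop_knuth :
    (∀ i j k : ℕ, i ≤ j → j < k →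
      uop i ∘ₗ uop k ∘ₗ uop j = uop k ∘ₗ uop i ∘ₗ uop j) ∧
    (∀ i j k : ℕ, i < j → j ≤ k →
      uop j ∘ₗ uop i ∘ₗ uop k = uop j ∘ₗ uop k ∘ₗ uop i) := by
  refine ⟨fun i j k hij hjk => ?_, fun i j k hij hjk => ?_⟩
  · refine Finsupp.lhom_ext fun p c => ?_
    simp only [LinearMap.comp_apply, uop_single j]
    exact uop_uop_single_comm (hij.trans_lt hjk) (grow_apply_lt_grow_apply hij hjk) _
  · refine Finsupp.lhom_ext fun p c => ?_
    simp only [LinearMap.comp_apply]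
    rcases (p.antitone (hij.trans_le hjk).le).lt_or_eq with hlt | heq
    · rw [uop_uop_single_comm (hij.trans_le hjk) hlt]
    · exact uop_uop_uop_single_of_eq hij hjk heq.symm c
end

section
/- Define linear operators $v_1, v_2, \ldots$ on the free $\mathbb{Q}[\beta]$-module spanned by all partitions by: $v_i \cdot \lambda = \lambda + e_i$ if $\lambda + e_i$ is again a partition (i.e., a box can be added in row $i$), and $v_i \cdot \lambda = -\beta \cdot \lambda$ otherwise. Then the operators $v_i$ satisfy the Knuth relations: $v_i v_k v_j = v_k v_i v_j$ for $i \le j < k$, and $v_j v_i v_k = v_j v_k v_i$ for $i < j \le k$. -/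
open scoped Classical

/-- The operator `v_i` on the free `ℚ[β]`-module spanned by all partitions:
`v_i · λ = λ + e_i` if `λ + e_i` is again a partition, and `v_i · λ = -β · λ` otherwise. -/
noncomputable def vop (i : ℕ) :
    (PartitionF →₀ Polynomial ℚ) →ₗ[Polynomial ℚ] (PartitionF →₀ Polynomial ℚ) :=
  Finsupp.lift (PartitionF →₀ Polynomial ℚ) (Polynomial ℚ) PartitionF fun p =>
    if h : ∀ a b : ℕ, a ≤ b → (addBox i p.1) b ≤ (addBox i p.1) a then
      Finsupp.single (⟨addBox i p.1, h⟩ : PartitionF) (1 : Polynomial ℚ)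
    else
      (-(Polynomial.X : Polynomial ℚ)) • Finsupp.single p (1 : Polynomial ℚ)

/-!
Each `v_i` maps a partition to a monomial `(-β) ^ n • μ`, so compositions of the `v_i` can be
computed on pairs (shape, power of `-β`). Whether a box can be added in row `i` depends only on
rows `i - 1` and `i`; hence `v_i` and `v_k` commute when `k > i + 1`, which settles both Knuth
relations except for `v_i v_{i+1} v_i = v_{i+1} v_i v_i` and
`v_{i+1} v_i v_{i+1} = v_{i+1} v_{i+1} v_i`. These two are checked by splitting on which of the
relevant rows are addable.
-/

open Polynomial

def CanAddBox (i : ℕ) (f : ℕ →₀ ℕ) : Prop := i = 0 ∨ f i < f (i - 1)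

lemma addBox_apply_self (i : ℕ) (f : ℕ →₀ ℕ) : addBox i f i = f i + 1 := by
  simp [addBox]

lemma addBox_apply_of_ne {i j : ℕ} (f : ℕ →₀ ℕ) (h : i ≠ j) : addBox i f j = f j := by
  simp [addBox, h]

lemma addBox_comm (i j : ℕ) (f : ℕ →₀ ℕ) : addBox i (addBox j f) = addBox j (addBox i f) :=
  add_right_comm _ _ _

lemma antitone_addBox_iff {i : ℕ} {f : ℕ →₀ ℕ} (hf : Antitone f) :
    Antitone (addBox i f) ↔ CanAddBox i f := by
  constructor
  · intro h
    rcases i with _ | i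
    · exact Or.inl rfl
    · have := h (Nat.le_add_right i 1)
      rw [addBox_apply_self, addBox_apply_of_ne _ (by omega)] at this
      exact Or.inr (by simpa using this)
  · intro h
    refine antitone_nat_of_succ_le fun n => ?_
    have hn := hf (Nat.le_add_right n 1)
    rcases eq_or_ne i (n + 1) with rfl | hn₁
    · rw [addBox_apply_self, addBox_apply_of_ne f (by omega)]
      simpa [CanAddBox] using h
    · rw [addBox_apply_of_ne f hn₁]
      rcases eq_or_ne i n with rfl | hn₀
      · rw [addBox_apply_self]; omega
      · rw [addBox_apply_of_ne f hn₀]; exact hn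

lemma canAddBox_addBox_iff_of_ne {i j : ℕ} {f : ℕ →₀ ℕ} (h₁ : j ≠ i) (h₂ : j + 1 ≠ i) :
    CanAddBox i (addBox j f) ↔ CanAddBox i f := by
  unfold CanAddBox
  rw [addBox_apply_of_ne f h₁, addBox_apply_of_ne f (by omega)]

lemma canAddBox_succ_addBox {i : ℕ} {f : ℕ →₀ ℕ} (h : f (i + 1) ≤ f i) :
    CanAddBox (i + 1) (addBox i f) := by
  right
  rw [Nat.add_sub_cancel, addBox_apply_self, addBox_apply_of_ne f (by omega)]
  omega

lemma canAddBox_succ_addBox_succ_addBox_iff (i : ℕ) (f : ℕ →₀ ℕ) :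
    CanAddBox (i + 1) (addBox (i + 1) (addBox i f)) ↔ CanAddBox (i + 1) f := by
  unfold CanAddBox
  simp only [Nat.add_sub_cancel, addBox_apply_self, addBox_apply_of_ne _ (by omega : i + 1 ≠ i),
    addBox_apply_of_ne _ (by omega : i ≠ i + 1), Nat.add_one_ne_zero, false_or]
  omega

/-- A pair `(f, n)` stands for the monomial `(-β) ^ n • f`, and `boxStep i` is the action of `v_i`
on it. -/
noncomputable def boxStep (i : ℕ) (x : (ℕ →₀ ℕ) × ℕ) : (ℕ →₀ ℕ) × ℕ :=
  if CanAddBox i x.1 then (addBox i x.1, x.2) else (x.1, x.2 + 1)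

lemma antitone_boxStep {i : ℕ} {x : (ℕ →₀ ℕ) × ℕ} (hx : Antitone x.1) :
    Antitone (boxStep i x).1 := by
  unfold boxStep
  split_ifs with h
  · exact (antitone_addBox_iff hx).2 h
  · exact hx

lemma boxStep_comm {i k : ℕ} (h : i + 1 < k) (x : (ℕ →₀ ℕ) × ℕ) :
    boxStep i (boxStep k x) = boxStep k (boxStep i x) := by
  obtain ⟨f, n⟩ := x
  have hi := canAddBox_addBox_iff_of_ne (f := f) (i := i) (j := k) (by omega) (by omega)
  have hk := canAddBox_addBox_iff_of_ne (f := f) (i := k) (j := i) (by omega) (by omega)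
  by_cases hfi : CanAddBox i f <;> by_cases hfk : CanAddBox k f <;>
    simp [boxStep, hi, hk, hfi, hfk, addBox_comm i k]

lemma boxStep_boxStep_succ_boxStep {i : ℕ} {x : (ℕ →₀ ℕ) × ℕ} (hx : x.1 (i + 1) ≤ x.1 i) :
    boxStep i (boxStep (i + 1) (boxStep i x)) = boxStep (i + 1) (boxStep i (boxStep i x)) := by
  obtain ⟨f, n⟩ := x
  dsimp only at hx
  have h :=
    canAddBox_addBox_iff_of_ne (f := addBox i f) (i := i) (j := i + 1) (by omega) (by omega)
  have h' := canAddBox_addBox_iff_of_ne (f := f) (i := i) (j := i + 1) (by omega) (by omega)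
  have hs : CanAddBox (i + 1) (addBox i (addBox i f)) :=
    canAddBox_succ_addBox (by rw [addBox_apply_self, addBox_apply_of_ne f (by omega)]; omega)
  by_cases hfi : CanAddBox i f <;> by_cases hfi' : CanAddBox i (addBox i f) <;>
    by_cases hfk : CanAddBox (i + 1) f <;>
    simp [boxStep, h, h', hs, hfi, hfi', hfk, canAddBox_succ_addBox hx, addBox_comm i (i + 1)]

lemma boxStep_succ_boxStep_boxStep_succ {i : ℕ} {x : (ℕ →₀ ℕ) × ℕ} (hx : x.1 (i + 1) ≤ x.1 i) :
    boxStep (i + 1) (boxStep i (boxStep (i + 1) x)) =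
      boxStep (i + 1) (boxStep (i + 1) (boxStep i x)) := by
  obtain ⟨f, n⟩ := x
  have h := canAddBox_addBox_iff_of_ne (f := f) (i := i) (j := i + 1) (by omega) (by omega)
  by_cases hfi : CanAddBox i f <;> by_cases hfk : CanAddBox (i + 1) f <;>
    by_cases hfk' : CanAddBox (i + 1) (addBox (i + 1) f) <;>
    simp [boxStep, h, hfi, hfk, hfk', canAddBox_succ_addBox hx,
      canAddBox_succ_addBox_succ_addBox_iff, addBox_comm i (i + 1)]

/-- Going through this constructor keeps `rw` from having to see through `PartitionF`. -/
def PartitionF.ofAntitone (f : ℕ →₀ ℕ) (hf : Antitone f) : PartitionF := ⟨f, hf⟩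

lemma vop_single_one_of_antitone {i : ℕ} {f : ℕ →₀ ℕ} (hf : Antitone f)
    (h : Antitone (addBox i f)) :
    vop i (Finsupp.single (PartitionF.ofAntitone f hf) 1) =
      Finsupp.single (PartitionF.ofAntitone (addBox i f) h) 1 :=
  (congrFun ((Finsupp.lift _ _ _).symm_apply_apply _) _).trans (dif_pos h)

lemma vop_single_one_of_not_antitone {i : ℕ} {f : ℕ →₀ ℕ} (hf : Antitone f)
    (h : ¬ Antitone (addBox i f)) :
    vop i (Finsupp.single (PartitionF.ofAntitone f hf) 1) =
      (-X : ℚ[X]) • Finsupp.single (PartitionF.ofAntitone f hf) 1 :=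
  (congrFun ((Finsupp.lift _ _ _).symm_apply_apply _) _).trans (dif_neg h)

/-- The monomial encoded by `(f, n)`, with the junk value `0` when `f` is not a partition. -/
noncomputable def boxTerm (x : (ℕ →₀ ℕ) × ℕ) : PartitionF →₀ ℚ[X] :=
  if h : Antitone x.1 then
    (-X : ℚ[X]) ^ x.2 • Finsupp.single (PartitionF.ofAntitone x.1 h) (1 : ℚ[X])
  else 0

lemma boxTerm_of_antitone {f : ℕ →₀ ℕ} (hf : Antitone f) (n : ℕ) :
    boxTerm (f, n) = (-X : ℚ[X]) ^ n • Finsupp.single (PartitionF.ofAntitone f hf) (1 : ℚ[X]) :=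
  dif_pos hf

lemma vop_boxTerm (i : ℕ) {x : (ℕ →₀ ℕ) × ℕ} (hx : Antitone x.1) :
    vop i (boxTerm x) = boxTerm (boxStep i x) := by
  obtain ⟨f, n⟩ := x
  dsimp only at hx
  rw [boxTerm_of_antitone hx, map_smul]
  by_cases h : CanAddBox i f
  · have hf' := (antitone_addBox_iff hx).2 h
    rw [boxStep, if_pos h, boxTerm_of_antitone hf', vop_single_one_of_antitone hx hf']
  · have hf' : ¬ Antitone (addBox i f) := mt (antitone_addBox_iff hx).1 h
    rw [boxStep, if_neg h, boxTerm_of_antitone hx, vop_single_one_of_not_antitone hx hf',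
      smul_smul, pow_succ]

lemma vop_vop_vop_boxTerm (a b c : ℕ) {x : (ℕ →₀ ℕ) × ℕ} (hx : Antitone x.1) :
    vop a (vop b (vop c (boxTerm x))) = boxTerm (boxStep a (boxStep b (boxStep c x))) := by
  rw [vop_boxTerm c hx, vop_boxTerm b (antitone_boxStep hx),
    vop_boxTerm a (antitone_boxStep (antitone_boxStep hx))]

lemma linearMap_ext_boxTerm {A B : (PartitionF →₀ ℚ[X]) →ₗ[ℚ[X]] (PartitionF →₀ ℚ[X])}
    (h : ∀ f : ℕ →₀ ℕ, Antitone f → A (boxTerm (f, 0)) = B (boxTerm (f, 0))) : A = B := by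
  refine Finsupp.lhom_ext' fun p => LinearMap.ext_ring ?_
  have hp := h p.1 p.2
  rw [boxTerm_of_antitone p.2, pow_zero, one_smul] at hp
  exact hp

lemma vop_comp_vop_comm {i k : ℕ} (h : i + 1 < k) : vop i ∘ₗ vop k = vop k ∘ₗ vop i := by
  refine linearMap_ext_boxTerm fun f hf => ?_
  simp only [LinearMap.comp_apply]
  rw [vop_boxTerm k hf, vop_boxTerm i (antitone_boxStep hf), vop_boxTerm i hf,
    vop_boxTerm k (antitone_boxStep hf), boxStep_comm h]

lemma vop_comp_vop_succ_comp_vop (i : ℕ) :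
    vop i ∘ₗ vop (i + 1) ∘ₗ vop i = vop (i + 1) ∘ₗ vop i ∘ₗ vop i := by
  refine linearMap_ext_boxTerm fun f hf => ?_
  simp only [LinearMap.comp_apply]
  rw [vop_vop_vop_boxTerm _ _ _ hf, vop_vop_vop_boxTerm _ _ _ hf,
    boxStep_boxStep_succ_boxStep (hf (Nat.le_add_right i 1))]

lemma vop_succ_comp_vop_comp_vop_succ (i : ℕ) :
    vop (i + 1) ∘ₗ vop i ∘ₗ vop (i + 1) = vop (i + 1) ∘ₗ vop (i + 1) ∘ₗ vop i := by
  refine linearMap_ext_boxTerm fun f hf => ?_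
  simp only [LinearMap.comp_apply]
  rw [vop_vop_vop_boxTerm _ _ _ hf, vop_vop_vop_boxTerm _ _ _ hf,
    boxStep_succ_boxStep_boxStep_succ (hf (Nat.le_add_right i 1))]

/-- The operators `v_i` satisfy the Knuth relations:
`v_i v_k v_j = v_k v_i v_j` for `i ≤ j < k`, and
`v_j v_i v_k = v_j v_k v_i` for `i < j ≤ k`. -/
theorem vop_knuth :
    (∀ i j k : ℕ, i ≤ j → j < k →
      vop i ∘ₗ vop k ∘ₗ vop j = vop k ∘ₗ vop i ∘ₗ vop j) ∧
    (∀ i j k : ℕ, i < j → j ≤ k →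
      vop j ∘ₗ vop i ∘ₗ vop k = vop j ∘ₗ vop k ∘ₗ vop i) := by
  constructor
  · intro i j k hij hjk
    rcases lt_or_ge (i + 1) k with h | h
    · rw [← LinearMap.comp_assoc, vop_comp_vop_comm h, LinearMap.comp_assoc]
    · obtain rfl : j = i := by omega
      obtain rfl : k = j + 1 := by omega
      exact vop_comp_vop_succ_comp_vop j
  · intro i j k hij hjk
    rcases lt_or_ge (i + 1) k with h | h
    · rw [vop_comp_vop_comm h]
    · obtain rfl : j = i + 1 := by omega
      obtain rfl : k = i + 1 := by omega
      exact vop_succ_comp_vop_comp_vop_succ i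
end

section
/- Define linear operators $V_1, V_2, \ldots$ on the free $\mathbb{Q}[\beta]$-module spanned by all partitions by: $V_i \cdot \lambda = \lambda - e_i$ if a box can be removed from row $i$ of $\lambda$ (i.e., $\lambda - e_i$ is a partition with $\lambda_i > 0$), and $V_i \cdot \lambda = -\beta \cdot \lambda$ otherwise. Then the $V_i$ satisfy the reverse Knuth relations: $V_i V_k V_j = V_k V_i V_j$ for $i \ge j > k$, and $V_j V_i V_k = V_j V_k V_i$ for $i > j \ge k$. -/
set_option maxHeartbeats 2000000


open scoped Classical

/-- `λ - e_i`: remove a box from row `i` (truncated at `0`). -/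
noncomputable def remBox (i : ℕ) (f : ℕ →₀ ℕ) : ℕ →₀ ℕ := Finsupp.update f i (f i - 1)

/-- The operator `V_i` on the free `ℚ[β]`-module spanned by all partitions:
`V_i · λ = λ - e_i` if a box can be removed from row `i` (i.e. `λᵢ > 0` and `λ - e_i` is
again a partition), and `V_i · λ = -β · λ` otherwise. -/
noncomputable def Vop (i : ℕ) :
    (PartitionF →₀ Polynomial ℚ) →ₗ[Polynomial ℚ] (PartitionF →₀ Polynomial ℚ) :=
  Finsupp.lift (PartitionF →₀ Polynomial ℚ) (Polynomial ℚ) PartitionF fun p =>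
    if h : 0 < p.1 i ∧ ∀ a b : ℕ, a ≤ b → (remBox i p.1) b ≤ (remBox i p.1) a then
      Finsupp.single (⟨remBox i p.1, h.2⟩ : PartitionF) (1 : Polynomial ℚ)
    else
      (-(Polynomial.X : Polynomial ℚ)) • Finsupp.single p (1 : Polynomial ℚ)

lemma remBox_apply (i : ℕ) (f : ℕ →₀ ℕ) (j : ℕ) :
    remBox i f j = if j = i then f i - 1 else f j := by
  classical
  rw [remBox, Finsupp.coe_update, Function.update_apply]

lemma canRem_iff (i : ℕ) (p : PartitionF) :
    (0 < p.1 i ∧ ∀ a b : ℕ, a ≤ b → (remBox i p.1) b ≤ (remBox i p.1) a)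
      ↔ p.1 (i+1) < p.1 i := by
  constructor
  · rintro ⟨hpos, hmono⟩
    have h2 := hmono i (i+1) (by omega)
    rw [remBox_apply, remBox_apply] at h2
    split_ifs at h2 <;> omega
  · intro hlt
    refine ⟨by omega, fun a b hab => ?_⟩
    rw [remBox_apply, remBox_apply]
    have m1 := p.2 a b hab
    rcases eq_or_ne a i with rfl | ha
    · rcases eq_or_ne b a with rfl | hb
      · split_ifs <;> omega
      · have m2 := p.2 (a+1) b (by omega)
        all_goals split_ifs <;> omega
    · rcases eq_or_ne b i with rfl | hb
      · split_ifs <;> omega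
      · split_ifs <;> omega

noncomputable def step (i : ℕ) (p : PartitionF) : Polynomial ℚ × PartitionF :=
  if h : 0 < p.1 i ∧ ∀ a b : ℕ, a ≤ b → (remBox i p.1) b ≤ (remBox i p.1) a
  then (1, ⟨remBox i p.1, h.2⟩) else (-Polynomial.X, p)

lemma step_fst (i : ℕ) (p : PartitionF) :
    (step i p).1 = if p.1 (i+1) < p.1 i then 1 else -Polynomial.X := by
  rw [step]
  split_ifs with h1 h2 h2
  · rfl
  · exact absurd ((canRem_iff i p).mp h1) h2
  · exact absurd ((canRem_iff i p).mpr h2) h1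
  · rfl

lemma step_val (i : ℕ) (p : PartitionF) (j : ℕ) :
    ((step i p).2).1 j = if p.1 (i+1) < p.1 i ∧ j = i then p.1 i - 1 else p.1 j := by
  rw [step]
  split_ifs with h1 h2 h2
  · simp only
    rw [remBox_apply, if_pos h2.2]
  · simp only
    rw [remBox_apply]
    have : ¬ j = i := fun hj => h2 ⟨(canRem_iff i p).mp h1, hj⟩
    rw [if_neg this]
  · exact absurd ((canRem_iff i p).mpr h2.1) h1
  · rfl

lemma Vop_single (i : ℕ) (p : PartitionF) (c : Polynomial ℚ) :
    Vop i (Finsupp.single p c)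
      = (c * (step i p).1) • Finsupp.single (step i p).2 (1 : Polynomial ℚ) := by
  rw [Vop, Finsupp.lift_apply, Finsupp.sum_single_index (by simp), step]
  split_ifs with h
  · simp [mul_one]
  · rw [smul_smul]

lemma Vop2_single (a b : ℕ) (p : PartitionF) (r : Polynomial ℚ) :
    Vop a (Vop b (Finsupp.single p r))
      = ((r * (step b p).1) * (step a (step b p).2).1)
        • Finsupp.single (step a (step b p).2).2 (1 : Polynomial ℚ) := by
  rw [Vop_single, map_smul, Vop_single, smul_smul, one_mul]

lemma Vop3_single (a b c : ℕ) (p : PartitionF) (r : Polynomial ℚ) :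
    Vop a (Vop b (Vop c (Finsupp.single p r)))
      = ((r * (step c p).1 * (step b (step c p).2).1) * (step a (step b (step c p).2).2).1)
        • Finsupp.single (step a (step b (step c p).2).2).2 (1 : Polynomial ℚ) := by
  rw [Vop_single, map_smul, Vop_single, smul_smul, map_smul, Vop_single, smul_smul, one_mul, one_mul]

lemma commVop (i k : ℕ) (h : k + 2 ≤ i) : Vop i ∘ₗ Vop k = Vop k ∘ₗ Vop i := by
  apply Finsupp.lhom_ext
  intro p r
  simp only [LinearMap.comp_apply]
  rw [Vop2_single, Vop2_single]
  have hpart : (step i (step k p).2).2 = (step k (step i p).2).2 := by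
    apply Subtype.ext
    apply Finsupp.ext
    intro j
    simp only [step_val]
    rcases eq_or_ne j i with rfl | hji
    · split_ifs <;> omega
    · rcases eq_or_ne j k with rfl | hjk
      · split_ifs <;> omega
      · split_ifs <;> omega
  have hscal : r * (step k p).1 * (step i (step k p).2).1
      = r * (step i p).1 * (step k (step i p).2).1 := by
    simp only [step_fst, step_val]
    split_ifs <;> first | (exfalso; omega) | ring1
  rw [hpart, hscal]

lemma braidA (m : ℕ) :
    Vop (m+1) ∘ₗ Vop m ∘ₗ Vop (m+1) = Vop m ∘ₗ Vop (m+1) ∘ₗ Vop (m+1) := by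
  apply Finsupp.lhom_ext
  intro p r
  simp only [LinearMap.comp_apply]
  rw [Vop3_single, Vop3_single]
  have d1 : p.1 (m+1) ≤ p.1 m := p.2 m (m+1) (by omega)
  have d2 : p.1 (m+1+1) ≤ p.1 (m+1) := p.2 (m+1) (m+1+1) (by omega)
  have t1 : (m+1 = m) ↔ False := iff_false_intro (by omega)
  have t2 : (m+1+1 = m+1) ↔ False := iff_false_intro (by omega)
  have t3 : (m+1+1 = m) ↔ False := iff_false_intro (by omega)
  have t4 : (m = m+1) ↔ False := iff_false_intro (by omega)
  have hpart : (step (m+1) (step m (step (m+1) p).2).2).2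
      = (step m (step (m+1) (step (m+1) p).2).2).2 := by
    apply Subtype.ext
    apply Finsupp.ext
    intro j
    rcases eq_or_ne j m with rfl | hj1
    · simp only [step_val, t1, t2, t3, t4, eq_self_iff_true, and_true, and_false,
        if_true, if_false]
      all_goals split_ifs <;> omega
    · rcases eq_or_ne j (m+1) with rfl | hj2
      · simp only [step_val, t1, t2, t3, t4, eq_self_iff_true, and_true, and_false,
          if_true, if_false]
        all_goals split_ifs <;> omega
      · simp only [step_val, t1, t2, t3, t4, hj1, hj2, eq_self_iff_true, and_true, and_false,
          if_true, if_false, if_neg, iff_false]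
        all_goals split_ifs <;> omega
  have hscal : r * (step (m+1) p).1 * (step m (step (m+1) p).2).1
        * (step (m+1) (step m (step (m+1) p).2).2).1
      = r * (step (m+1) p).1 * (step (m+1) (step (m+1) p).2).1
        * (step m (step (m+1) (step (m+1) p).2).2).1 := by
    simp only [step_fst, step_val, t1, t2, t3, t4, eq_self_iff_true, and_true, and_false,
      if_true, if_false]
    split_ifs <;> first | (exfalso; omega) | ring1
  rw [hpart, hscal]

lemma braidB (m : ℕ) :
    Vop m ∘ₗ Vop (m+1) ∘ₗ Vop m = Vop m ∘ₗ Vop m ∘ₗ Vop (m+1) := by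
  apply Finsupp.lhom_ext
  intro p r
  simp only [LinearMap.comp_apply]
  rw [Vop3_single, Vop3_single]
  have d1 : p.1 (m+1) ≤ p.1 m := p.2 m (m+1) (by omega)
  have d2 : p.1 (m+1+1) ≤ p.1 (m+1) := p.2 (m+1) (m+1+1) (by omega)
  have t1 : (m+1 = m) ↔ False := iff_false_intro (by omega)
  have t2 : (m+1+1 = m+1) ↔ False := iff_false_intro (by omega)
  have t3 : (m+1+1 = m) ↔ False := iff_false_intro (by omega)
  have t4 : (m = m+1) ↔ False := iff_false_intro (by omega)
  have hpart : (step m (step (m+1) (step m p).2).2).2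
      = (step m (step m (step (m+1) p).2).2).2 := by
    apply Subtype.ext
    apply Finsupp.ext
    intro j
    rcases eq_or_ne j m with rfl | hj1
    · simp only [step_val, t1, t2, t3, t4, eq_self_iff_true, and_true, and_false,
        if_true, if_false]
      all_goals split_ifs <;> omega
    · rcases eq_or_ne j (m+1) with rfl | hj2
      · simp only [step_val, t1, t2, t3, t4, eq_self_iff_true, and_true, and_false,
          if_true, if_false]
        all_goals split_ifs <;> omega
      · simp only [step_val, t1, t2, t3, t4, hj1, hj2, eq_self_iff_true, and_true, and_false,
          if_true, if_false, if_neg, iff_false]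
        all_goals split_ifs <;> omega
  have hscal : r * (step m p).1 * (step (m+1) (step m p).2).1
        * (step m (step (m+1) (step m p).2).2).1
      = r * (step (m+1) p).1 * (step m (step (m+1) p).2).1
        * (step m (step m (step (m+1) p).2).2).1 := by
    simp only [step_fst, step_val, t1, t2, t3, t4, eq_self_iff_true, and_true, and_false,
      if_true, if_false]
    split_ifs <;> first | (exfalso; omega) | ring1
  rw [hpart, hscal]

/-- The operators `V_i` satisfy the reverse Knuth relations:
`V_i V_k V_j = V_k V_i V_j` for `i ≥ j > k`, and
`V_j V_i V_k = V_j V_k V_i` for `i > j ≥ k`. -/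
theorem Vop_reverse_knuth :
    (∀ i j k : ℕ, j ≤ i → k < j →
      Vop i ∘ₗ Vop k ∘ₗ Vop j = Vop k ∘ₗ Vop i ∘ₗ Vop j) ∧
    (∀ i j k : ℕ, j < i → k ≤ j →
      Vop j ∘ₗ Vop i ∘ₗ Vop k = Vop j ∘ₗ Vop k ∘ₗ Vop i) := by
  constructor
  · intro i j k hji hkj
    by_cases h : k + 2 ≤ i
    · rw [← LinearMap.comp_assoc, ← LinearMap.comp_assoc, commVop i k h]
    · have hi : i = k + 1 := by omega
      have hj : j = k + 1 := by omega
      subst hi hj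
      exact braidA k
  · intro i j k hji hkj
    by_cases h : k + 2 ≤ i
    · rw [commVop i k h]
    · have hi : i = k + 1 := by omega
      have hj : j = k := by omega
      subst hi hj
      exact braidB j
end
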